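/- For every s ∈ (0, d] and every sequence {e_k} of positive real numbers, there exists a sequence of points {x_n} ⊂ ℝ^d with all points distinct, generating P_n = {x_1,...,x_n}, and an increasing sequence of indices {n_k}, such that J_s(P_{n_k}) = e_k for all k. -/

import Mathlib

open Finset Filter Topology

/-!
Everything happens on a line inside `ℝ^d`, where `d ≥ 1` because `0 < s ≤ d`. Appending a point
`z` to the configuration `x₀ < ⋯ < x_{p-1}` increases the unnormalized energy by
`2 ∑_{j<p} (z - x_j)^{-s}`, a continuous function of `z > x_{p-1}` that tends to `+∞` as
`z ↓ x_{p-1}` and to `0` as `z → ∞`; by the intermediate value theorem it takes every positive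
value. To reach the target `e_k`, first append many far-away points, which barely change the
energy `E` while the target energy `e_k n (n - 1)` grows without bound in `n`, and then one more
point whose increment is exactly the missing amount. Repeating this for `k = 0, 1, …` builds the
sequence.
-/

/-- The unnormalized energy `n (n - 1) J_s(P_n)` of the first `n` points of `x`. -/
noncomputable def rieszEnergy {α : Type*} [PseudoMetricSpace α] (s : ℝ) (x : ℕ → α) (n : ℕ) :
    ℝ :=
  ∑ i ∈ range n, ∑ j ∈ (range n).erase i, dist (x i) (x j) ^ (-s)

section RieszEnergy

variable {α : Type*} [PseudoMetricSpace α] (s : ℝ)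

theorem rieszEnergy_congr {x y : ℕ → α} {n : ℕ} (h : ∀ i < n, x i = y i) :
    rieszEnergy s x n = rieszEnergy s y n :=
  sum_congr rfl fun i hi => sum_congr rfl fun j hj => by
    rw [h i (mem_range.1 hi), h j (mem_range.1 (mem_of_mem_erase hj))]

theorem rieszEnergy_succ (x : ℕ → α) (n : ℕ) :
    rieszEnergy s x (n + 1) =
      rieszEnergy s x n + 2 * ∑ j ∈ range n, dist (x n) (x j) ^ (-s) := by
  have herase : ∀ i ∈ range n, (range (n + 1)).erase i = insert n ((range n).erase i) :=
    fun i hi => by rw [range_add_one, erase_insert_of_ne (mem_range.1 hi).ne']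
  have hnotMem : ∀ i, n ∉ (range n).erase i := fun i h => notMem_range_self (mem_of_mem_erase h)
  simp only [rieszEnergy, sum_range_succ (fun i => ∑ j ∈ (range (n + 1)).erase i, _)]
  rw [sum_congr rfl fun i hi => by rw [herase i hi, sum_insert (hnotMem i)], sum_add_distrib,
    range_add_one, erase_insert notMem_range_self]
  simp only [dist_comm (x _) (x n)]
  ring

theorem rieszEnergy_update_succ (x : ℕ → α) (n : ℕ) (z : α) :
    rieszEnergy s (Function.update x n z) (n + 1) =
      rieszEnergy s x n + 2 * ∑ j ∈ range n, dist z (x j) ^ (-s) := by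
  have hx : ∀ i < n, Function.update x n z i = x i := fun i hi =>
    Function.update_of_ne hi.ne _ _
  rw [rieszEnergy_succ, rieszEnergy_congr s hx, Function.update_self]
  congr 2
  exact sum_congr rfl fun j hj => by rw [hx j (mem_range.1 hj)]

theorem Isometry.rieszEnergy_comp {β : Type*} [PseudoMetricSpace β] {f : α → β}
    (hf : Isometry f) (x : ℕ → α) (n : ℕ) :
    rieszEnergy s (f ∘ x) n = rieszEnergy s x n := by
  simp only [rieszEnergy, Function.comp_apply, hf.dist_eq]

end RieszEnergy

theorem Set.InjOn.update_Iio_succ {α : Type*} {x : ℕ → α} {n : ℕ} (hx : Set.InjOn x (Set.Iio n))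
    {z : α} (hz : ∀ i < n, x i ≠ z) :
    Set.InjOn (Function.update x n z) (Set.Iio (n + 1)) := by
  rw [Set.Iio_add_one_eq_Iic, ← Set.Iio_insert, Set.injOn_insert Set.self_notMem_Iio,
    Function.update_self]
  refine ⟨fun a ha b hb hab => hx ha hb ?_, ?_⟩
  · simpa [Function.update_of_ne (Set.mem_Iio.1 ha).ne,
      Function.update_of_ne (Set.mem_Iio.1 hb).ne] using hab
  · rintro ⟨i, hi, hiz⟩
    exact hz i hi (by rwa [Function.update_of_ne (Set.mem_Iio.1 hi).ne] at hiz)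

theorem exists_injective_of_forall_extend {α : Type*} [Nonempty α]
    (P : ℕ → (ℕ → α) → ℕ → Prop)
    (hP : ∀ k x y n, (∀ i < n, x i = y i) → P k x n → P k y n)
    (hext : ∀ k (x : ℕ → α) m, Set.InjOn x (Set.Iio m) →
      ∃ y n, m < n ∧ (∀ i < m, y i = x i) ∧ Set.InjOn y (Set.Iio n) ∧ P k y n) :
    ∃ x : ℕ → α, Function.Injective x ∧ ∃ nk : ℕ → ℕ, StrictMono nk ∧ ∀ k, P k x (nk k) := by
  choose y n hlt hagree hinj hPy using hext
  let Prefix := {p : (ℕ → α) × ℕ // Set.InjOn p.1 (Set.Iio p.2)}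
  let next (k : ℕ) (p : Prefix) : Prefix :=
    ⟨(y k p.1.1 p.1.2 p.2, n k p.1.1 p.1.2 p.2), hinj k p.1.1 p.1.2 p.2⟩
  let pre : ℕ → Prefix := fun k =>
    Nat.rec ⟨(fun _ => Classical.arbitrary α, 0), by simp⟩ (fun k p => next k p) k
  have hmono : StrictMono fun k => (pre k).1.2 := strictMono_nat_of_lt_succ fun k => hlt _ _ _ _
  have hstable : ∀ k l, k ≤ l → ∀ i < (pre k).1.2, (pre l).1.1 i = (pre k).1.1 i := by
    intro k l hkl
    induction l, hkl using Nat.le_induction with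
    | base => exact fun _ _ => rfl
    | succ l hkl ih => exact fun i hi =>
        (hagree _ _ _ _ i (hi.trans_le (hmono.monotone hkl))).trans (ih i hi)
  let x i := (pre (i + 1)).1.1 i
  have hx : ∀ k, ∀ i < (pre k).1.2, x i = (pre k).1.1 i := fun k i hi =>
    (le_total k (i + 1)).elim (fun h => hstable k _ h i hi)
      (fun h => (hstable _ k h i ((Nat.lt_succ_self i).trans_le hmono.le_apply)).symm)
  refine ⟨x, fun a b hab => ?_, fun k => (pre (k + 1)).1.2, hmono.comp (strictMono_id.add_const 1),
    fun k => hP _ _ _ _ (fun i hi => (hx (k + 1) i hi).symm) (hPy _ _ _ _)⟩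
  have hbound : ∀ i ≤ max a b, i < (pre (max a b + 1)).1.2 := fun i hi =>
    (Nat.lt_succ_of_le hi).trans_le hmono.le_apply
  have ha := hbound a (le_max_left a b)
  have hb := hbound b (le_max_right a b)
  rw [hx (max a b + 1) a ha, hx (max a b + 1) b hb] at hab
  exact (pre (max a b + 1)).2 ha hb hab

section Line

variable {ι : Type*} {s : ℝ}

theorem tendsto_sum_rpow_neg_sub_atTop (hs : 0 < s) (t : Finset ι) (a : ι → ℝ) :
    Tendsto (fun z => ∑ j ∈ t, (z - a j) ^ (-s)) atTop (𝓝 0) := by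
  simpa [← sub_eq_add_neg] using tendsto_finsetSum t fun j _ =>
    (tendsto_rpow_neg_atTop hs).comp (tendsto_atTop_add_const_right _ (-a j) tendsto_id)

theorem exists_forall_lt_sum_rpow_neg_sub_eq (hs : 0 < s) {t : Finset ι} (ht : t.Nonempty)
    (a : ι → ℝ) {c : ℝ} (hc : 0 < c) :
    ∃ z, (∀ j ∈ t, a j < z) ∧ ∑ j ∈ t, (z - a j) ^ (-s) = c := by
  obtain ⟨j₀, hj₀, hM⟩ := exists_mem_eq_sup' ht a
  have hlt : ∀ z ∈ Set.Ioi (a j₀), ∀ j ∈ t, a j < z := fun z hz j hj =>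
    (hM ▸ le_sup' a hj).trans_lt hz
  have hcont : ContinuousOn (fun z => ∑ j ∈ t, (z - a j) ^ (-s)) (Set.Ioi (a j₀)) :=
    continuousOn_finsetSum t fun j hj => (continuousOn_id.sub continuousOn_const).rpow_const
      fun z hz => Or.inl (sub_pos.2 (hlt z hz j hj)).ne'
  -- the term of a point where the maximum is attained blows up
  have hblowup : Tendsto (fun z => ∑ j ∈ t, (z - a j) ^ (-s)) (𝓝[>] (a j₀)) atTop := by
    have hsub : Tendsto (fun z => z - a j₀) (𝓝[>] (a j₀)) (𝓝[>] 0) := by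
      refine tendsto_nhdsWithin_iff.2
        ⟨?_, eventually_nhdsWithin_of_forall fun z hz => Set.mem_Ioi.2 (sub_pos.2 hz)⟩
      simpa using ((continuous_sub_right (a j₀)).tendsto (a j₀)).mono_left nhdsWithin_le_nhds
    refine tendsto_atTop_mono' _ ?_
      ((tendsto_rpow_neg_nhdsGT_zero (neg_neg_iff_pos.2 hs)).comp hsub)
    filter_upwards [self_mem_nhdsWithin] with z hz
    exact single_le_sum (f := fun j => (z - a j) ^ (-s))
      (fun j hj => Real.rpow_nonneg (sub_pos.2 (hlt z hz j hj)).le _) hj₀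
  obtain ⟨z, hz, hzc⟩ := isPreconnected_Ioi.intermediate_value_Ioi (l₂ := 𝓝[>] (a j₀))
    (le_principal_iff.2 (Ioi_mem_atTop _)) inf_le_right hcont
    (tendsto_sum_rpow_neg_sub_atTop hs t a) hblowup hc
  exact ⟨z, hlt z hz, hzc⟩

theorem rieszEnergy_update_succ_of_forall_lt (x : ℕ → ℝ) (n : ℕ) {z : ℝ}
    (hz : ∀ i < n, x i < z) :
    rieszEnergy s (Function.update x n z) (n + 1) =
      rieszEnergy s x n + 2 * ∑ j ∈ range n, (z - x j) ^ (-s) := by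
  rw [rieszEnergy_update_succ]
  congr 2
  exact sum_congr rfl fun j hj => by
    rw [Real.dist_eq, abs_of_pos (sub_pos.2 (hz j (mem_range.1 hj)))]

theorem exists_update_rieszEnergy_lt (hs : 0 < s) (x : ℕ → ℝ) (n : ℕ) {δ : ℝ} (hδ : 0 < δ) :
    ∃ z, (∀ i < n, x i < z) ∧
      rieszEnergy s (Function.update x n z) (n + 1) < rieszEnergy s x n + δ := by
  have hfar : ∀ᶠ z in atTop, ∀ i ∈ range n, x i < z :=
    (eventually_all_finset _).2 fun i _ => eventually_gt_atTop (x i)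
  have hsmall := (tendsto_sum_rpow_neg_sub_atTop hs (range n) x).eventually_lt_const (half_pos hδ)
  obtain ⟨z, hz, hsum⟩ := (hfar.and hsmall).exists
  have hz' : ∀ i < n, x i < z := fun i hi => hz i (mem_range.2 hi)
  refine ⟨z, hz', ?_⟩
  rw [rieszEnergy_update_succ_of_forall_lt x n hz']
  linarith

theorem exists_update_rieszEnergy_eq (hs : 0 < s) (x : ℕ → ℝ) {n : ℕ} (hn : 0 < n) {E : ℝ}
    (hE : rieszEnergy s x n < E) :
    ∃ z, (∀ i < n, x i < z) ∧ rieszEnergy s (Function.update x n z) (n + 1) = E := by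
  obtain ⟨z, hz, hsum⟩ := exists_forall_lt_sum_rpow_neg_sub_eq hs (nonempty_range_iff.2 hn.ne') x
    (half_pos (sub_pos.2 hE))
  have hz' : ∀ i < n, x i < z := fun i hi => hz i (mem_range.2 hi)
  refine ⟨z, hz', ?_⟩
  rw [rieszEnergy_update_succ_of_forall_lt x n hz', hsum]
  ring

theorem exists_extend_rieszEnergy_lt (hs : 0 < s) (x : ℕ → ℝ) {m : ℕ}
    (hx : Set.InjOn x (Set.Iio m)) (N : ℕ) {δ : ℝ} (hδ : 0 < δ) :
    ∃ y : ℕ → ℝ, (∀ i < m, y i = x i) ∧ Set.InjOn y (Set.Iio (m + N)) ∧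
      rieszEnergy s y (m + N) < rieszEnergy s x m + δ := by
  induction N generalizing δ with
  | zero => exact ⟨x, fun _ _ => rfl, hx, by simpa using hδ⟩
  | succ N ih =>
    obtain ⟨y, hyx, hy, hyE⟩ := ih (half_pos hδ)
    obtain ⟨z, hz, hzE⟩ := exists_update_rieszEnergy_lt hs y (m + N) (half_pos hδ)
    refine ⟨Function.update y (m + N) z, fun i hi => ?_,
      hy.update_Iio_succ fun i hi => (hz i hi).ne, by rw [← add_assoc]; linarith⟩
    rw [Function.update_of_ne (by omega), hyx i hi]

theorem exists_extend_rieszEnergy_eq (hs : 0 < s) {e : ℝ} (he : 0 < e) (x : ℕ → ℝ) {m : ℕ}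
    (hx : Set.InjOn x (Set.Iio m)) :
    ∃ y n, m < n ∧ (∀ i < m, y i = x i) ∧ Set.InjOn y (Set.Iio n) ∧
      2 ≤ n ∧ rieszEnergy s y n = e * (n * (n - 1)) := by
  obtain ⟨N, hN⟩ := exists_nat_gt ((rieszEnergy s x m + 1) / e)
  rw [div_lt_iff₀ he] at hN
  obtain ⟨y, hyx, hy, hyE⟩ := exists_extend_rieszEnergy_lt hs x hx (N + 1) one_pos
  set n := m + (N + 1) + 1
  have hT : rieszEnergy s y (m + (N + 1)) < e * (n * (n - 1)) := by
    have hNn : (N : ℝ) ≤ n * (n - 1) := by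
      simp only [n]; push_cast; nlinarith
    nlinarith
  obtain ⟨z, hz, hzE⟩ := exists_update_rieszEnergy_eq hs y (by omega) hT
  refine ⟨Function.update y (m + (N + 1)) z, n, by omega, fun i hi => ?_,
    hy.update_Iio_succ fun i hi => (hz i hi).ne, by omega, hzE⟩
  rw [Function.update_of_ne (by omega), hyx i hi]

end Line

/-- For every `s ∈ (0, d]` and every sequence of positive reals `{e_k}`, there is a sequence
of distinct points in `ℝ^d` generating `P_n = {x_1,...,x_n}` and an increasing sequence of
indices `{n_k}` with `J_s(P_{n_k}) = e_k` for all `k`. -/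
theorem exists_points_with_prescribed_energies
    (d : ℕ) (s : ℝ) (hs0 : 0 < s) (hsd : s ≤ d) (e : ℕ → ℝ) (he : ∀ k, 0 < e k) :
    ∃ x : ℕ → EuclideanSpace ℝ (Fin d), Function.Injective x ∧
      ∃ nk : ℕ → ℕ, StrictMono nk ∧ (∀ k, 2 ≤ nk k) ∧
        ∀ k, (1 / ((nk k : ℝ) * ((nk k : ℝ) - 1))) *
            ∑ i ∈ Finset.range (nk k), ∑ j ∈ (Finset.range (nk k)).erase i,
              dist (x i) (x j) ^ (-s) = e k := by
  have hd : 0 < d := by exact_mod_cast hs0.trans_le hsd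
  obtain ⟨x, hx, nk, hnk, hxE⟩ := exists_injective_of_forall_extend
    (fun k x n => 2 ≤ n ∧ rieszEnergy s x n = e k * (n * (n - 1)))
    (fun _ _ _ _ hxy h => ⟨h.1, (rieszEnergy_congr s hxy).symm.trans h.2⟩)
    (fun k _ _ hx => exists_extend_rieszEnergy_eq hs0 (he k) _ hx)
  set f : ℝ → EuclideanSpace ℝ (Fin d) := EuclideanSpace.single ⟨0, hd⟩
  have hf : Isometry f := Isometry.of_dist_eq fun a b => by simp [f]
  refine ⟨f ∘ x, hf.injective.comp hx, nk, hnk, fun k => (hxE k).1, fun k => ?_⟩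
  have hn : (2 : ℝ) ≤ nk k := by exact_mod_cast (hxE k).1
  change 1 / _ * rieszEnergy s (f ∘ x) (nk k) = e k
  rw [hf.rieszEnergy_comp, (hxE k).2, one_div_mul_eq_div,
    mul_div_cancel_right₀ _ (by nlinarith)]
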